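/- Let X be a compact metric space, let σ : X → X be continuous and surjective, and let τ_i, τ_j : X → X be continuous maps with σ ∘ τ_i = id_X, σ ∘ τ_j = id_X, and τ_i(X) ∩ τ_j(X) = ∅. Let μ be a Borel probability measure on X with μ.map τ_i ≪ μ and μ.map τ_j ≪ μ, and set p_i = d(μ.map τ_i)/dμ, p_j = d(μ.map τ_j)/dμ. Then for all φ, ψ ∈ L²(X, μ): ∫_X conj(φ(σ(x))) · ψ(σ(x)) · √(p_i(x)) · √(p_j(x)) dμ(x) = 0; that is, the isometries S_i : φ ↦ (φ∘σ)·√(p_i) and S_j : φ ↦ (φ∘σ)·√(p_j) on L²(X, μ) have orthogonal ranges, S_i*S_j = 0. -/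

import Mathlib

/-! The density `pᵢ` vanishes `μ`-a.e. off the closed set `τᵢ(X)`, because its integral over the
complement is at most `(μ.map τᵢ)(τᵢ(X)ᶜ) = 0`. As the images are disjoint, at almost every point
one of `√pᵢ`, `√pⱼ` is zero, so the integrand vanishes a.e. -/

open MeasureTheory

namespace MeasureTheory.Measure

variable {α β : Type*} [MeasurableSpace α] [MeasurableSpace β]

lemma ae_rnDeriv_eq_zero_of_measure_eq_zero {μ ν : Measure α} {s : Set α}
    (hs : MeasurableSet s) (hμs : μ s = 0) :
    ∀ᵐ x ∂ν, x ∈ s → μ.rnDeriv ν x = 0 := by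
  have hint : ∫⁻ x in s, μ.rnDeriv ν x ∂ν = 0 :=
    le_antisymm ((setLIntegral_rnDeriv_le s).trans hμs.le) bot_le
  exact (setLIntegral_eq_zero_iff hs (measurable_rnDeriv μ ν)).mp hint

lemma ae_rnDeriv_map_eq_zero_of_notMem_range {μ : Measure α} {ν : Measure β} {τ : α → β}
    (hτ : Measurable τ) (hrange : MeasurableSet (Set.range τ)) :
    ∀ᵐ x ∂ν, x ∉ Set.range τ → (μ.map τ).rnDeriv ν x = 0 := by
  refine ae_rnDeriv_eq_zero_of_measure_eq_zero (s := (Set.range τ)ᶜ) hrange.compl ?_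
  rw [map_apply hτ hrange.compl, Set.preimage_compl, Set.preimage_range, Set.compl_univ,
    measure_empty]

end MeasureTheory.Measure

theorem statement10_general {X : Type*} [MetricSpace X] [CompactSpace X]
    [MeasurableSpace X] [BorelSpace X]
    (σ τi τj : X → X)
    (hτi : Continuous τi) (hτj : Continuous τj)
    (hdisj : Set.range τi ∩ Set.range τj = ∅)
    (μ : Measure X)
    (pi pj : X → ENNReal)
    (hpi : pi = (μ.map τi).rnDeriv μ) (hpj : pj = (μ.map τj).rnDeriv μ)
    (φ ψ : X → ℂ) :
    ∫ x, (starRingEnd ℂ) (φ (σ x)) * ψ (σ x)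
        * (Real.sqrt ((pi x).toReal) : ℂ)
        * (Real.sqrt ((pj x).toReal) : ℂ) ∂μ = 0 := by
  have hi := Measure.ae_rnDeriv_map_eq_zero_of_notMem_range (μ := μ) (ν := μ)
    hτi.measurable (isCompact_range hτi).isClosed.measurableSet
  have hj := Measure.ae_rnDeriv_map_eq_zero_of_notMem_range (μ := μ) (ν := μ)
    hτj.measurable (isCompact_range hτj).isClosed.measurableSet
  refine integral_eq_zero_of_ae ?_
  filter_upwards [hi, hj] with x hxi hxj
  have hpij : pi x = 0 ∨ pj x = 0 := by
    by_cases h : x ∈ Set.range τi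
    · exact .inr (hpj ▸ hxj ((Set.disjoint_iff_inter_eq_empty.mpr hdisj).notMem_of_mem_left h))
    · exact .inl (hpi ▸ hxi h)
  rcases hpij with h | h <;> simp [h]

/-- Orthogonality of ranges, `Sᵢ*Sⱼ = 0`, for the isometries `Sᵢ φ = (φ∘σ)·√pᵢ` on
`L²(X,μ)` built from branches with disjoint images:
`∫ conj(φ∘σ)·(ψ∘σ)·√pᵢ·√pⱼ dμ = 0`. -/
theorem statement10 {X : Type*} [MetricSpace X] [CompactSpace X]
    [MeasurableSpace X] [BorelSpace X]
    (σ τi τj : X → X) (hσc : Continuous σ) (hσs : Function.Surjective σ)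
    (hτi : Continuous τi) (hτj : Continuous τj)
    (hστi : σ ∘ τi = id) (hστj : σ ∘ τj = id)
    (hdisj : Set.range τi ∩ Set.range τj = ∅)
    (μ : Measure X) [IsProbabilityMeasure μ]
    (haci : μ.map τi ≪ μ) (hacj : μ.map τj ≪ μ)
    (pi pj : X → ENNReal)
    (hpi : pi = (μ.map τi).rnDeriv μ) (hpj : pj = (μ.map τj).rnDeriv μ)
    (φ ψ : X → ℂ) (hφ : MemLp φ 2 μ) (hψ : MemLp ψ 2 μ) :
    ∫ x, (starRingEnd ℂ) (φ (σ x)) * ψ (σ x)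
        * (Real.sqrt ((pi x).toReal) : ℂ)
        * (Real.sqrt ((pj x).toReal) : ℂ) ∂μ = 0 :=
  statement10_general σ τi τj hτi hτj hdisj μ pi pj hpi hpj φ ψ
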